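/- arXiv:2209.03775 — 3 statements merged into one kernel-verified Lean document; each statement's English description precedes it below -/
import Mathlib

section
/- For all real numbers u ∈ (0,1) and z ∈ [0,1), the double series ∑_{p≥1} ∑_{n≥0} Q_{n,p}(1)·u^p·z^n converges and equals u + (u²/(1−u))·(1 + (z−1)·(1−uz)^{−1/u}), where (1−uz)^{−1/u} denotes the real power exp(−(1/u)·log(1−uz)). -/
open MeasureTheory intervalIntegral

/-- `Q n p x` : probability that a dart game with `p` remaining players, where the
probability of beating the best throw so far is `x`, ends after exactly `n` further throws. -/
noncomputable def Q : ℕ → ℕ → ℝ → ℝ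
  | 0, p, _ => if p = 1 then 1 else 0
  | n + 1, p, x =>
      if p ≤ 1 then 0
      else (1 - x) * Q n (p - 1) x + ∫ v in (0:ℝ)..x, Q n p v

/-!
Write `F_n(x) = ∑_p Q_{n,p}(x) u^p` (a polynomial in `u`, `Qpoly u n x`). The recursion for `Q`
becomes `F_{n+2}(x) = u (1 - x) F_{n+1}(x) + ∫_0^x F_{n+1}`, and integrating by parts against
`(1 - x)^k` shows that the moments `m_{n,k} = ∫_0^1 (1 - v)^k F_{n+1}(v) dv` satisfy
`m_{n+1,k} = (u + 1/(k+1)) m_{n,k+1}`. Hence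
`F_{n+2}(1) = m_{n+1,0} = u²/(n+2) ∏_{j<n} (u + 1/(j+1)) = u²/(1-u) (b_{n+1} - b_{n+2})`,
where `b_m` are the coefficients of the binomial series of `(1 - u z)^{-1/u}`, so the sum over `n`
telescopes against that series. Since `0 ≤ Q ≤ 1`, the double series is dominated by
`∑ u^p z^n` and may be summed over `p` first.
-/

open Finset

theorem Q_zero (p : ℕ) (x : ℝ) : Q 0 p x = if p = 1 then 1 else 0 := rfl

theorem Q_succ_one (n : ℕ) (x : ℝ) : Q (n + 1) 1 x = 0 := by
  simp [Q]

theorem Q_succ_add_two (n p : ℕ) (x : ℝ) :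
    Q (n + 1) (p + 2) x = (1 - x) * Q n (p + 1) x + ∫ v in (0 : ℝ)..x, Q n (p + 2) v := by
  simp [Q]

theorem Q_eq_zero_of_lt {n p : ℕ} (h : n + 1 < p) (x : ℝ) : Q n p x = 0 := by
  induction n generalizing p x with
  | zero => simp [Q_zero, h.ne']
  | succ n ih =>
    obtain ⟨p, rfl⟩ : ∃ q, p = q + 2 := ⟨p - 2, by omega⟩
    simp [Q_succ_add_two, ih (show n + 1 < p + 1 by omega), ih (show n + 1 < p + 2 by omega)]

theorem continuous_Q (n p : ℕ) : Continuous (Q n p) := by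
  induction n generalizing p with
  | zero => exact continuous_const
  | succ n ih =>
    simp only [Q]
    split
    · exact continuous_const
    · exact ((continuous_const.sub continuous_id).mul (ih _)).add
        (continuous_primitive (fun a b ↦ (ih p).intervalIntegrable a b) 0)

theorem Q_mem_Icc (n p : ℕ) {x : ℝ} (hx : x ∈ Set.Icc (0 : ℝ) 1) :
    Q n p x ∈ Set.Icc (0 : ℝ) 1 := by
  induction n generalizing p x with
  | zero => rw [Q_zero]; split <;> norm_num
  | succ n ih =>
    simp only [Q]
    split
    · norm_num
    · obtain ⟨hx0, hx1⟩ := hx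
      have hint : ∫ v in (0 : ℝ)..x, Q n p v ∈ Set.Icc 0 x := by
        have hbd : ∀ v ∈ Set.Icc 0 x, Q n p v ∈ Set.Icc (0 : ℝ) 1 :=
          fun v hv ↦ ih p ⟨hv.1, hv.2.trans hx1⟩
        constructor
        · exact integral_nonneg hx0 fun v hv ↦ (hbd v hv).1
        · simpa using integral_mono_on hx0 ((continuous_Q n p).intervalIntegrable _ _)
            (intervalIntegrable_const (μ := volume)) fun v hv ↦ (hbd v hv).2
      obtain ⟨hq0, hq1⟩ := ih (p - 1) ⟨hx0, hx1⟩
      constructor <;> nlinarith [hint.1, hint.2]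

theorem integral_one_sub_pow (k : ℕ) : ∫ v in (0 : ℝ)..1, (1 - v) ^ k = 1 / (k + 1) := by
  simp [intervalIntegral.integral_comp_sub_left (fun v ↦ v ^ k) (1 : ℝ)]

theorem integral_one_sub_pow_mul_primitive {f : ℝ → ℝ} (hf : Continuous f) (k : ℕ) :
    ∫ v in (0 : ℝ)..1, (1 - v) ^ k * ∫ w in (0 : ℝ)..v, f w
      = (∫ v in (0 : ℝ)..1, (1 - v) ^ (k + 1) * f v) / (k + 1) := by
  have hk : (k + 1 : ℝ) ≠ 0 := by positivity
  have hpow : ∀ x ∈ Set.uIcc (0 : ℝ) 1,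
      HasDerivAt (fun y : ℝ ↦ -(1 - y) ^ (k + 1) / (k + 1)) ((1 - x) ^ k) x := by
    intro x _
    have hlin : HasDerivAt (fun y : ℝ ↦ 1 - y) (-1) x := by
      simpa using (hasDerivAt_id x).const_sub 1
    refine ((hlin.pow (k + 1)).neg.div_const ((k : ℝ) + 1)).congr_deriv ?_
    push_cast
    field_simp
  have hprim : ∀ x ∈ Set.uIcc (0 : ℝ) 1,
      HasDerivAt (fun y ↦ ∫ w in (0 : ℝ)..y, f w) (f x) x :=
    fun x _ ↦ integral_hasDerivAt_right (hf.intervalIntegrable _ _)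
      (hf.stronglyMeasurableAtFilter _ _) hf.continuousAt
  have hparts := integral_mul_deriv_eq_deriv_mul hpow hprim
    (((continuous_const.sub continuous_id).pow k).intervalIntegrable _ _)
    (hf.intervalIntegrable _ _)
  simp only [sub_self, zero_pow (Nat.succ_ne_zero k), neg_zero, zero_div, zero_mul,
    intervalIntegral.integral_same, mul_zero, sub_zero, zero_sub, neg_div,
    neg_mul, intervalIntegral.integral_neg, neg_inj] at hparts
  rw [← hparts]
  simp_rw [div_mul_eq_mul_div, intervalIntegral.integral_div]

noncomputable def Qpoly (u : ℝ) (n : ℕ) (x : ℝ) : ℝ :=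
  ∑ p ∈ range (n + 1), Q n (p + 1) x * u ^ (p + 1)

section Qpoly

variable (u : ℝ)

theorem hasSum_Q_mul_pow (n : ℕ) (x : ℝ) :
    HasSum (fun p ↦ Q n (p + 1) x * u ^ (p + 1)) (Qpoly u n x) :=
  hasSum_sum_of_ne_finset_zero fun p hp ↦ by
    rw [Q_eq_zero_of_lt (by simpa using hp), zero_mul]

theorem continuous_Qpoly (n : ℕ) : Continuous (Qpoly u n) :=
  continuous_finsetSum _ fun p _ ↦ (continuous_Q n (p + 1)).mul continuous_const

theorem Qpoly_zero (x : ℝ) : Qpoly u 0 x = u := by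
  simp [Qpoly, Q_zero]

theorem Qpoly_one (x : ℝ) : Qpoly u 1 x = u ^ 2 * (1 - x) := by
  simp [Qpoly, sum_range_succ, Q_succ_add_two, Q_succ_one, Q_zero]
  ring

theorem Qpoly_succ_succ (n : ℕ) (x : ℝ) :
    Qpoly u (n + 2) x
      = u * (1 - x) * Qpoly u (n + 1) x + ∫ v in (0 : ℝ)..x, Qpoly u (n + 1) v := by
  have hshift : ∀ v,
      ∑ p ∈ range (n + 2), Q (n + 1) (p + 2) v * u ^ (p + 2) = Qpoly u (n + 1) v := by
    intro v
    rw [sum_range_succ, Q_eq_zero_of_lt (by omega), Qpoly, sum_range_succ' _ (n + 1), Q_succ_one]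
    simp
  have hint : ∀ p ∈ range (n + 2),
      IntervalIntegrable (fun v ↦ Q (n + 1) (p + 2) v * u ^ (p + 2)) volume 0 x :=
    fun p _ ↦ ((continuous_Q _ _).mul continuous_const).intervalIntegrable _ _
  calc Qpoly u (n + 2) x
      = ∑ p ∈ range (n + 2), (u * (1 - x) * (Q (n + 1) (p + 1) x * u ^ (p + 1))
          + (∫ v in (0 : ℝ)..x, Q (n + 1) (p + 2) v) * u ^ (p + 2)) := by
        rw [Qpoly, sum_range_succ', Q_succ_one, zero_mul, add_zero]
        exact sum_congr rfl fun p _ ↦ by rw [Q_succ_add_two]; ring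
    _ = u * (1 - x) * Qpoly u (n + 1) x
          + ∫ v in (0 : ℝ)..x, ∑ p ∈ range (n + 2), Q (n + 1) (p + 2) v * u ^ (p + 2) := by
        simp_rw [sum_add_distrib, ← mul_sum, intervalIntegral.integral_finsetSum hint,
          intervalIntegral.integral_mul_const, Qpoly]
    _ = _ := by simp_rw [hshift]

theorem integral_one_sub_pow_mul_Qpoly (n k : ℕ) :
    ∫ v in (0 : ℝ)..1, (1 - v) ^ k * Qpoly u (n + 1) v
      = u ^ 2 / (k + n + 2) * ∏ j ∈ range n, (u + 1 / (k + j + 1)) := by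
  induction n generalizing k with
  | zero =>
    calc ∫ v in (0 : ℝ)..1, (1 - v) ^ k * Qpoly u 1 v
        = u ^ 2 * ∫ v in (0 : ℝ)..1, (1 - v) ^ (k + 1) := by
          rw [← intervalIntegral.integral_const_mul]
          exact intervalIntegral.integral_congr fun v _ ↦ by rw [Qpoly_one]; ring
      _ = _ := by
          rw [integral_one_sub_pow]
          push_cast
          ring
  | succ n ih =>
    have hQ := continuous_Qpoly u (n + 1)
    have hprim : Continuous fun v ↦ ∫ w in (0 : ℝ)..v, Qpoly u (n + 1) w :=
      continuous_primitive (fun a b ↦ hQ.intervalIntegrable (μ := volume) a b) 0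
    calc ∫ v in (0 : ℝ)..1, (1 - v) ^ k * Qpoly u (n + 2) v
        = u * (∫ v in (0 : ℝ)..1, (1 - v) ^ (k + 1) * Qpoly u (n + 1) v)
          + ∫ v in (0 : ℝ)..1, (1 - v) ^ k * ∫ w in (0 : ℝ)..v, Qpoly u (n + 1) w := by
          simp_rw [Qpoly_succ_succ, mul_add]
          rw [intervalIntegral.integral_add, ← intervalIntegral.integral_const_mul]
          · exact congrArg (· + _) (intervalIntegral.integral_congr fun v _ ↦ by ring)
          all_goals apply Continuous.intervalIntegrable; fun_prop
      _ = (u + 1 / (k + 1)) * ∫ v in (0 : ℝ)..1, (1 - v) ^ (k + 1) * Qpoly u (n + 1) v := by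
          rw [integral_one_sub_pow_mul_primitive (continuous_Qpoly u _)]
          ring
      _ = _ := by
          rw [ih, prod_range_succ']
          push_cast
          field_simp
          ring_nf

theorem Qpoly_succ_succ_one (n : ℕ) :
    Qpoly u (n + 2) 1 = u ^ 2 / (n + 2) * ∏ j ∈ range n, (u + 1 / (j + 1)) := by
  rw [Qpoly_succ_succ, sub_self, mul_zero, zero_mul, zero_add]
  simpa using integral_one_sub_pow_mul_Qpoly u n 0

end Qpoly

theorem succ_mul_multichoose_succ (r : ℝ) (n : ℕ) :
    (n + 1 : ℝ) * Ring.multichoose r (n + 1) = (r + n) * Ring.multichoose r n := by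
  have h := Ring.factorial_nsmul_multichoose_eq_ascPochhammer r
  have hn1 := h (n + 1)
  rw [Polynomial.ascPochhammer_smeval_eq_eval, ascPochhammer_succ_eval,
    ← Polynomial.ascPochhammer_smeval_eq_eval, ← h n, Nat.factorial_succ] at hn1
  simp only [nsmul_eq_mul] at hn1
  push_cast at hn1
  apply mul_left_cancel₀ (Nat.cast_ne_zero.mpr n.factorial_ne_zero)
  linear_combination hn1

noncomputable def binomCoeff (u : ℝ) (n : ℕ) : ℝ := Ring.multichoose (1 / u) n * u ^ n

theorem binomCoeff_zero (u : ℝ) : binomCoeff u 0 = 1 := by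
  simp [binomCoeff]

theorem succ_mul_binomCoeff_succ {u : ℝ} (hu : u ≠ 0) (n : ℕ) :
    (n + 1 : ℝ) * binomCoeff u (n + 1) = (1 + n * u) * binomCoeff u n := by
  rw [binomCoeff, binomCoeff, pow_succ, ← mul_assoc, ← mul_assoc, succ_mul_multichoose_succ]
  field_simp

theorem hasSum_binomCoeff_mul_pow {u z : ℝ} (h : |u * z| < 1) :
    HasSum (fun n ↦ binomCoeff u n * z ^ n) (Real.exp (-(1 / u) * Real.log (1 - u * z))) := by
  have hball : u * z ∈ Metric.eball (0 : ℝ) 1 := by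
    rwa [Metric.mem_eball, edist_zero_right, enorm_eq_nnnorm, ENNReal.coe_lt_one_iff,
      ← NNReal.coe_lt_coe, coe_nnnorm, NNReal.coe_one, Real.norm_eq_abs]
  have H := (Real.one_div_one_sub_rpow_hasFPowerSeriesOnBall_zero (1 / u)).hasSum hball
  have hpos : 0 < 1 - u * z := by linarith [le_abs_self (u * z)]
  simp only [FormalMultilinearSeries.ofScalars_apply_eq, zero_add, smul_eq_mul,
    Real.rpow_def_of_pos hpos, one_div (Real.exp _), ← Real.exp_neg, ← neg_mul,
    mul_comm _ (1 / u), mul_pow, ← Ring.multichoose_eq, ← mul_assoc] at H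
  exact H

theorem prod_add_inv_succ_eq_binomCoeff {u : ℝ} (hu : u ≠ 0) (n : ℕ) :
    ∏ j ∈ range n, (u + 1 / (j + 1)) = (n + 1) * binomCoeff u (n + 1) := by
  induction n with
  | zero => simpa [binomCoeff_zero] using (succ_mul_binomCoeff_succ hu 0).symm
  | succ n ih =>
    rw [prod_range_succ, ih, succ_mul_binomCoeff_succ hu (n + 1)]
    push_cast
    field_simp
    ring

theorem Qpoly_succ_one {u : ℝ} (hu0 : u ≠ 0) (hu1 : u ≠ 1) (n : ℕ) :
    Qpoly u (n + 1) 1 = u ^ 2 / (1 - u) * (binomCoeff u n - binomCoeff u (n + 1)) := by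
  have hsub : (1 - u) ≠ 0 := sub_ne_zero.mpr hu1.symm
  cases n with
  | zero =>
    have h1 := succ_mul_binomCoeff_succ hu0 0
    simp only [CharP.cast_eq_zero, zero_add, one_mul, zero_mul, add_zero] at h1
    simp [Qpoly_one, h1]
  | succ n =>
    rw [Qpoly_succ_succ_one, prod_add_inv_succ_eq_binomCoeff hu0]
    have h := succ_mul_binomCoeff_succ hu0 (n + 1)
    push_cast at h ⊢
    field_simp
    linear_combination h

theorem hasSum_sub_succ_mul_pow {R : Type*} [CommRing R] [TopologicalSpace R]
    [IsTopologicalRing R] {b : ℕ → R} {z B : R} (h : HasSum (fun n ↦ b n * z ^ n) B) :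
    HasSum (fun n ↦ (b n - b (n + 1)) * z ^ (n + 1)) (b 0 + (z - 1) * B) := by
  have hshift : HasSum (fun n ↦ b (n + 1) * z ^ (n + 1)) (B - b 0) := by
    simpa using (hasSum_nat_add_iff' 1).mpr h
  rw [show b 0 + (z - 1) * B = z * B - (B - b 0) by ring]
  exact ((h.mul_left z).sub hshift).congr_fun fun n ↦ by ring

theorem Summable.hasSum_of_hasSum_fiberwise_snd {α β γ : Type*} [AddCommMonoid α]
    [TopologicalSpace α] [ContinuousAdd α] [T3Space α] {f : β × γ → α} {g : γ → α}
    {a : α}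
    (hf : Summable f) (hfib : ∀ c, HasSum (fun b ↦ f (b, c)) (g c)) (hg : HasSum g a) :
    HasSum f a := by
  have hswap : HasSum g (∑' p, f p) :=
    (Equiv.prodComm γ β).tsum_eq f ▸ hf.prod_symm.hasSum.prod_fiberwise hfib
  exact hg.unique hswap ▸ hf.hasSum

theorem hasSum_Qpoly_one_mul_pow {u z : ℝ} (hu0 : u ≠ 0) (hu1 : u ≠ 1) (huz : |u * z| < 1) :
    HasSum (fun n ↦ Qpoly u n 1 * z ^ n)
      (u + u ^ 2 / (1 - u) * (1 + (z - 1) * Real.exp (-(1 / u) * Real.log (1 - u * z)))) := by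
  refine (hasSum_nat_add_iff' 1).mp ?_
  have h := (hasSum_sub_succ_mul_pow (hasSum_binomCoeff_mul_pow huz)).mul_left (u ^ 2 / (1 - u))
  simp only [binomCoeff_zero, ← mul_assoc, ← Qpoly_succ_one hu0 hu1] at h
  simpa [Qpoly_zero] using h

/-- For `u ∈ (0,1)` and `z ∈ [0,1)`, the double series `∑_{p≥1} ∑_{n≥0} Q_{n,p}(1) u^p z^n`
converges, with sum `u + (u²/(1−u))·(1 + (z−1)·(1−uz)^{−1/u})`, where `(1−uz)^{−1/u}`
denotes the real power `exp(−(1/u)·log(1−uz))`. -/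
theorem Q_genFun (u z : ℝ) (hu : u ∈ Set.Ioo (0:ℝ) 1) (hz : z ∈ Set.Ico (0:ℝ) 1) :
    HasSum (fun q : ℕ × ℕ => Q q.2 (q.1 + 1) 1 * u ^ (q.1 + 1) * z ^ q.2)
      (u + u ^ 2 / (1 - u) * (1 + (z - 1) * Real.exp (-(1 / u) * Real.log (1 - u * z)))) := by
  obtain ⟨hu0, hu1⟩ := hu
  obtain ⟨hz0, hz1⟩ := hz
  have hQ : ∀ n p, Q n p 1 ∈ Set.Icc (0 : ℝ) 1 := fun n p ↦ Q_mem_Icc n p (by norm_num)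
  have hgeom : Summable fun q : ℕ × ℕ ↦ u ^ (q.1 + 1) * z ^ q.2 :=
    ((summable_nat_add_iff 1).mpr (summable_geometric_of_lt_one hu0.le hu1)).mul_of_nonneg
      (summable_geometric_of_lt_one hz0 hz1) (fun p ↦ by positivity) (fun n ↦ by positivity)
  have hsum : Summable fun q : ℕ × ℕ ↦ Q q.2 (q.1 + 1) 1 * u ^ (q.1 + 1) * z ^ q.2 :=
    hgeom.of_nonneg_of_le (fun q ↦ by have := (hQ q.2 (q.1 + 1)).1; positivity)
      (fun q ↦ by
        gcongr
        exact mul_le_of_le_one_left (by positivity) (hQ _ _).2)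
  have huz : |u * z| < 1 := by
    rw [abs_of_nonneg (by positivity)]
    nlinarith
  exact hsum.hasSum_of_hasSum_fiberwise_snd (fun n ↦ (hasSum_Q_mul_pow u n 1).mul_right (z ^ n))
    (hasSum_Qpoly_one_mul_pow hu0.ne' hu1.ne huz)
end

section
/- For x ∈ [0,1] and z ∈ [0,1), define R_{p,k}(x,z) := ∑_{n≥0} R_{n,p,k}(x)·z^n. Then for every integer p ≥ 2 and all x ∈ [0,1], z ∈ [0,1): R_{p,1}(x,z) = z·∫_0^x R_{p,p}(v,z) dv, and for every 2 ≤ k ≤ p, R_{p,k}(x,z) = (1−x)·z·R_{p−1,k−1}(x,z) + z·∫_0^x R_{p,k−1}(v,z) dv, where R_{1,1}(x,z) = 1. -/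
open MeasureTheory intervalIntegral

/-- `R n p k x` : probability that, in a dart game with `p` remaining players where the
probability of beating the best throw so far is `x`, the `k`-th player in throwing order
wins after exactly `n` further throws. -/
noncomputable def R : ℕ → ℕ → ℕ → ℝ → ℝ
  | 0, p, k, _ => if p = 1 ∧ k = 1 then 1 else 0
  | n + 1, p, k, x =>
      if p ≤ 1 then 0
      else if k = 1 then ∫ v in (0:ℝ)..x, R n p p v
      else (1 - x) * R n (p - 1) (k - 1) x + ∫ v in (0:ℝ)..x, R n p (k - 1) v

/-- `Rgen p k x z = ∑_{n≥0} R_{n,p,k}(x)·z^n`, the generating function of the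
probabilities `R_{n,p,k}(x)` by the number of throws. -/
noncomputable def Rgen (p k : ℕ) (x z : ℝ) : ℝ := ∑' n : ℕ, R n p k x * z ^ n

/-!
Each `R n p k` is continuous with values in `[0,1]` on `[0,1]`, so the terms of every series
`∑ R n p k x z ^ n` are dominated by `z ^ n`. This makes the series summable and lets them be
integrated term by term. Since `R 0 p k = 0` for `p ≥ 2`, the generating function is `z` times the
series of the shifted coefficients `R (n + 1) p k`, and the defining recursion of `R (n + 1)` can be
summed termwise.
-/

lemma intervalIntegral_mem_Icc_of_mem_Icc {f : ℝ → ℝ} {a b : ℝ} (hab : a ≤ b)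
    (hf : IntervalIntegrable f volume a b) (h : ∀ v ∈ Set.Icc a b, f v ∈ Set.Icc (0:ℝ) 1) :
    (∫ v in a..b, f v) ∈ Set.Icc 0 (b - a) := by
  constructor
  · exact integral_nonneg hab fun v hv => (h v hv).1
  · calc (∫ v in a..b, f v) ≤ ∫ _ in a..b, (1:ℝ) :=
          integral_mono_on hab hf intervalIntegrable_const fun v hv => (h v hv).2
      _ = b - a := by simp

lemma norm_mul_pow_le_abs_pow {a : ℝ} (ha : |a| ≤ 1) (z : ℝ) (n : ℕ) : ‖a * z ^ n‖ ≤ |z| ^ n := by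
  rw [Real.norm_eq_abs, abs_mul, abs_pow]
  exact mul_le_of_le_one_left (pow_nonneg (abs_nonneg z) n) ha

lemma summable_mul_pow_of_abs_le_one {g : ℕ → ℝ} (hg : ∀ n, |g n| ≤ 1) {z : ℝ} (hz : |z| < 1) :
    Summable fun n => g n * z ^ n :=
  (summable_geometric_of_lt_one (abs_nonneg z) hz).of_norm_bounded
    fun n => norm_mul_pow_le_abs_pow (hg n) z n

lemma hasSum_intervalIntegral_mul_pow {f : ℕ → ℝ → ℝ} (hf : ∀ n, Continuous (f n)) {a b z : ℝ}
    (hfb : ∀ n, ∀ t ∈ Set.uIcc a b, |f n t| ≤ 1) (hz : |z| < 1) :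
    HasSum (fun n => (∫ t in a..b, f n t) * z ^ n) (∫ t in a..b, ∑' n, f n t * z ^ n) := by
  simp only [← intervalIntegral.integral_mul_const]
  refine hasSum_integral_of_dominated_convergence (fun n _ => |z| ^ n)
    (fun n => ((hf n).mul continuous_const).aestronglyMeasurable) (fun n => ?_)
    (ae_of_all _ fun _ _ => summable_geometric_of_lt_one (abs_nonneg z) hz)
    intervalIntegrable_const
    (ae_of_all _ fun t ht => (summable_mul_pow_of_abs_le_one
      (fun n => hfb n t (Set.uIoc_subset_uIcc ht)) hz).hasSum)
  exact ae_of_all _ fun t ht => norm_mul_pow_le_abs_pow (hfb n t (Set.uIoc_subset_uIcc ht)) z n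

lemma HasSum.mul_pow_of_succ {f : ℕ → ℝ} {z s : ℝ} (h0 : f 0 = 0)
    (h : HasSum (fun n => f (n + 1) * z ^ n) s) : HasSum (fun n => f n * z ^ n) (z * s) := by
  have shifted : HasSum (fun n => f (n + 1) * z ^ (n + 1)) (z * s) := by
    simpa only [pow_succ, mul_comm, mul_left_comm, mul_assoc] using h.mul_left z
  exact (hasSum_nat_add_iff' 1).1 (by simpa [h0] using shifted)

lemma R_zero_of_two_le {p : ℕ} (hp : 2 ≤ p) (k : ℕ) (x : ℝ) : R 0 p k x = 0 := by
  rw [R, if_neg (by omega)]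

lemma R_succ_one {p : ℕ} (hp : 2 ≤ p) (n : ℕ) (x : ℝ) :
    R (n + 1) p 1 x = ∫ v in (0:ℝ)..x, R n p p v := by
  rw [R, if_neg (by omega), if_pos rfl]

lemma R_succ_of_ne_one {p k : ℕ} (hp : 2 ≤ p) (hk : k ≠ 1) (n : ℕ) (x : ℝ) :
    R (n + 1) p k x = (1 - x) * R n (p - 1) (k - 1) x + ∫ v in (0:ℝ)..x, R n p (k - 1) v := by
  rw [R, if_neg (by omega), if_neg hk]

lemma continuous_R (n : ℕ) : ∀ p k, Continuous (R n p k) := by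
  induction n with
  | zero => intro p k; exact continuous_const
  | succ n ih =>
    intro p k
    have primitive (q l : ℕ) : Continuous fun x => ∫ v in (0:ℝ)..x, R n q l v :=
      continuous_primitive (fun a b => (ih q l).intervalIntegrable a b) 0
    show Continuous fun x => R (n + 1) p k x
    simp only [R]
    split_ifs
    · exact continuous_const
    · exact primitive p p
    · exact ((continuous_const.sub continuous_id).mul (ih _ _)).add (primitive p (k - 1))

lemma R_mem_Icc (n : ℕ) : ∀ p k, ∀ x ∈ Set.Icc (0:ℝ) 1, R n p k x ∈ Set.Icc (0:ℝ) 1 := by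
  induction n with
  | zero =>
    intro p k x _
    simp only [R]
    split_ifs <;> norm_num
  | succ n ih =>
    intro p k x hx
    have primitive (q l : ℕ) : (∫ v in (0:ℝ)..x, R n q l v) ∈ Set.Icc 0 x := by
      simpa using intervalIntegral_mem_Icc_of_mem_Icc hx.1
        ((continuous_R n q l).intervalIntegrable 0 x)
        fun v hv => ih q l v ⟨hv.1, hv.2.trans hx.2⟩
    simp only [R]
    split_ifs
    · norm_num
    · exact ⟨(primitive p p).1, (primitive p p).2.trans hx.2⟩
    · obtain ⟨hR0, hR1⟩ := ih (p - 1) (k - 1) x hx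
      obtain ⟨hI0, hIx⟩ := primitive p (k - 1)
      constructor <;> nlinarith [hx.1, hx.2]

lemma abs_R_le_one (n p k : ℕ) {x : ℝ} (hx : x ∈ Set.Icc (0:ℝ) 1) : |R n p k x| ≤ 1 :=
  abs_le.2 ⟨by linarith [(R_mem_Icc n p k x hx).1], (R_mem_Icc n p k x hx).2⟩

lemma hasSum_Rgen (p k : ℕ) {x z : ℝ} (hx : x ∈ Set.Icc (0:ℝ) 1) (hz : |z| < 1) :
    HasSum (fun n => R n p k x * z ^ n) (Rgen p k x z) :=
  (summable_mul_pow_of_abs_le_one (fun n => abs_R_le_one n p k hx) hz).hasSum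

lemma hasSum_integral_R_mul_pow (p k : ℕ) {x z : ℝ} (hx : x ∈ Set.Icc (0:ℝ) 1) (hz : |z| < 1) :
    HasSum (fun n => (∫ v in (0:ℝ)..x, R n p k v) * z ^ n) (∫ v in (0:ℝ)..x, Rgen p k v z) := by
  refine hasSum_intervalIntegral_mul_pow (continuous_R · p k) (fun n t ht => ?_) hz
  rw [Set.uIcc_of_le hx.1] at ht
  exact abs_R_le_one n p k ⟨ht.1, ht.2.trans hx.2⟩

/-- For `p ≥ 2`, `x ∈ [0,1]`, `z ∈ [0,1)`:
`R_{p,1}(x,z) = z·∫_0^x R_{p,p}(v,z) dv` and, for `2 ≤ k ≤ p`,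
`R_{p,k}(x,z) = (1−x)·z·R_{p−1,k−1}(x,z) + z·∫_0^x R_{p,k−1}(v,z) dv`. -/
theorem Rgen_recurrence (p : ℕ) (hp : 2 ≤ p) (x z : ℝ) (hx : x ∈ Set.Icc (0:ℝ) 1)
    (hz : z ∈ Set.Ico (0:ℝ) 1) :
    Rgen p 1 x z = z * ∫ v in (0:ℝ)..x, Rgen p p v z ∧
    ∀ k : ℕ, 2 ≤ k → k ≤ p →
      Rgen p k x z =
        (1 - x) * z * Rgen (p - 1) (k - 1) x z + z * ∫ v in (0:ℝ)..x, Rgen p (k - 1) v z := by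
  have hz' : |z| < 1 := abs_lt.2 ⟨by linarith [hz.1], hz.2⟩
  refine ⟨?_, fun k hk _ => ?_⟩
  · refine (HasSum.mul_pow_of_succ (R_zero_of_two_le hp 1 x) ?_).tsum_eq
    simpa only [R_succ_one hp] using hasSum_integral_R_mul_pow p p hx hz'
  · have shifted : HasSum (fun n => R (n + 1) p k x * z ^ n)
        ((1 - x) * Rgen (p - 1) (k - 1) x z + ∫ v in (0:ℝ)..x, Rgen p (k - 1) v z) := by
      simp only [R_succ_of_ne_one hp (by omega : k ≠ 1), add_mul, mul_assoc]
      exact ((hasSum_Rgen (p - 1) (k - 1) hx hz').mul_left (1 - x)).add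
        (hasSum_integral_R_mul_pow p (k - 1) hx hz')
    calc Rgen p k x z
        = z * ((1 - x) * Rgen (p - 1) (k - 1) x z + ∫ v in (0:ℝ)..x, Rgen p (k - 1) v z) :=
          (shifted.mul_pow_of_succ (f := (R · p k x)) (R_zero_of_two_le hp k x)).tsum_eq
      _ = _ := by ring
end

section
/- For every x ∈ [0,1]: P_{2,1}(x) = 1 − e^{−x} and P_{2,2}(x) = e^{−x}. In particular, P_{2,1} = 1 − e^{−1} and P_{2,2} = e^{−1}. -/
/-!
For two players, `R_{n+1,2,1}` and `R_{n+1,2,2}` are `x^n/n! - x^{n+1}/(n+1)!` or `0` according to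
the parity of `n`. Hence `P_{2,1} + P_{2,2}` is a telescoping exponential series, equal to `1`,
while `P_{2,2} - P_{2,1}` is `∑ ((-x)^n/n! + (-x)^{n+1}/(n+1)!) = 2e^{-x} - 1`.
-/

open MeasureTheory intervalIntegral

/-- `P p k x = ∑_{n≥0} R_{n,p,k}(x)` : the probability that, when `p` players remain and
the probability of beating the best throw so far is `x`, the `k`-th player in throwing
order wins the game. -/
noncomputable def P (p k : ℕ) (x : ℝ) : ℝ := ∑' n : ℕ, R n p k x

open Real Nat

noncomputable def expTerm (n : ℕ) (x : ℝ) : ℝ := x ^ n / n !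

lemma continuous_expTerm (n : ℕ) : Continuous (expTerm n) := by
  unfold expTerm
  fun_prop

lemma hasSum_expTerm (x : ℝ) : HasSum (expTerm · x) (exp x) := by
  rw [exp_eq_exp_ℝ]
  exact NormedSpace.expSeries_div_hasSum_exp x

lemma hasSum_expTerm_succ (x : ℝ) : HasSum (fun n => expTerm (n + 1) x) (exp x - 1) := by
  simpa [expTerm] using (hasSum_nat_add_iff' 1).mpr (hasSum_expTerm x)

lemma integral_expTerm (n : ℕ) (x : ℝ) : ∫ v in (0:ℝ)..x, expTerm n v = expTerm (n + 1) x := by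
  simp only [expTerm, intervalIntegral.integral_div, integral_pow, factorial_succ]
  push_cast
  field_simp
  simp

lemma hasSum_expTerm_sub_succ (x : ℝ) :
    HasSum (fun n => expTerm n x - expTerm (n + 1) x) 1 := by
  simpa using (hasSum_expTerm x).sub (hasSum_expTerm_succ x)

lemma neg_one_pow_mul_expTerm_sub_succ (n : ℕ) (x : ℝ) :
    (-1) ^ n * (expTerm n x - expTerm (n + 1) x) = expTerm n (-x) + expTerm (n + 1) (-x) := by
  simp only [expTerm, neg_pow x, pow_succ]
  ring

lemma hasSum_neg_one_pow_mul_expTerm_sub_succ (x : ℝ) :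
    HasSum (fun n => (-1) ^ n * (expTerm n x - expTerm (n + 1) x)) (2 * exp (-x) - 1) := by
  simp only [neg_one_pow_mul_expTerm_sub_succ]
  convert (hasSum_expTerm (-x)).add (hasSum_expTerm_succ (-x)) using 1
  ring

lemma R_zero_two (k : ℕ) (x : ℝ) : R 0 2 k x = 0 := by
  simp [R]

lemma R_succ_one_one (n : ℕ) (x : ℝ) : R (n + 1) 1 1 x = 0 := by
  simp [R]

lemma R_succ_two_one (n : ℕ) (x : ℝ) : R (n + 1) 2 1 x = ∫ v in (0:ℝ)..x, R n 2 2 v := by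
  simp [R]

lemma R_succ_two_two (n : ℕ) (x : ℝ) :
    R (n + 1) 2 2 x = (1 - x) * R n 1 1 x + ∫ v in (0:ℝ)..x, R n 2 1 v := by
  simp [R]

lemma R_succ_two (n : ℕ) (x : ℝ) :
    R (n + 1) 2 1 x = (1 - (-1) ^ n) / 2 * (expTerm n x - expTerm (n + 1) x) ∧
    R (n + 1) 2 2 x = (1 + (-1) ^ n) / 2 * (expTerm n x - expTerm (n + 1) x) := by
  induction n generalizing x with
  | zero => simp [R, expTerm]
  | succ n ih =>
    have integral_eq (c : ℝ) : ∫ v in (0:ℝ)..x, c * (expTerm n v - expTerm (n + 1) v) =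
        c * (expTerm (n + 1) x - expTerm (n + 2) x) := by
      rw [intervalIntegral.integral_const_mul, intervalIntegral.integral_sub
        ((continuous_expTerm _).intervalIntegrable _ _) ((continuous_expTerm _).intervalIntegrable _ _),
        integral_expTerm, integral_expTerm]
    rw [R_succ_two_one, R_succ_two_two, R_succ_one_one, funext fun v => (ih v).1,
      funext fun v => (ih v).2, integral_eq, integral_eq]
    constructor <;> ring

lemma hasSum_R_two_of_succ {k : ℕ} {x s : ℝ} (h : HasSum (fun n => R (n + 1) 2 k x) s) :
    HasSum (R · 2 k x) s := by
  simpa [R_zero_two] using (hasSum_nat_add_iff (f := (R · 2 k x)) 1).mp h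

lemma P_two_one (x : ℝ) : P 2 1 x = 1 - exp (-x) := by
  have h := ((hasSum_expTerm_sub_succ x).sub (hasSum_neg_one_pow_mul_expTerm_sub_succ x)).div_const 2
  rw [show (1 - (2 * exp (-x) - 1)) / 2 = 1 - exp (-x) by ring] at h
  refine (hasSum_R_two_of_succ (h.congr_fun fun n => ?_)).tsum_eq
  rw [(R_succ_two n x).1]
  ring

lemma P_two_two (x : ℝ) : P 2 2 x = exp (-x) := by
  have h := ((hasSum_expTerm_sub_succ x).add (hasSum_neg_one_pow_mul_expTerm_sub_succ x)).div_const 2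
  rw [show (1 + (2 * exp (-x) - 1)) / 2 = exp (-x) by ring] at h
  refine (hasSum_R_two_of_succ (h.congr_fun fun n => ?_)).tsum_eq
  rw [(R_succ_two n x).2]
  ring

/-- For the 2-player game: `P_{2,1}(x) = 1 − e^{−x}` and `P_{2,2}(x) = e^{−x}` for
`x ∈ [0,1]`; in particular `P_{2,1} = 1 − e^{−1}` and `P_{2,2} = e^{−1}`. -/
theorem P_two_players :
    (∀ x ∈ Set.Icc (0:ℝ) 1, P 2 1 x = 1 - Real.exp (-x) ∧ P 2 2 x = Real.exp (-x)) ∧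
    P 2 1 1 = 1 - Real.exp (-1) ∧ P 2 2 1 = Real.exp (-1) :=
  ⟨fun x _ => ⟨P_two_one x, P_two_two x⟩, P_two_one 1, P_two_two 1⟩
end
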